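/- For every x ∈ [-ε, ε] the integral ∫_{-ε}^{ε} log|x−y| / √(ε²−y²) dy = π·log(ε/2); in particular this value is independent of x. -/

import Mathlib

/-!
Substituting `y = ε cos θ` turns the weight `dy / √(ε² - y²)` into `dθ` on `(0, π)`, and writing
`x = ε cos φ` reduces the claim to `∫₀^π log |cos φ - cos θ| dθ = -π log 2`. By the
sum-to-product formula, `log |cos φ - cos θ|` is `log 2` plus the logarithms of `|sin ((φ ± θ)/2)|`;
after rescaling, these two integrals join into one integral of `log |sin|` over a full period,
whose value `-π log 2` is classical.
-/

open Real Set MeasureTheory intervalIntegral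
open scoped Interval

theorem sqrt_sq_sub_mul_cos_sq {ε θ : ℝ} (hε : 0 ≤ ε) (hθ : 0 ≤ sin θ) :
    √(ε ^ 2 - (ε * cos θ) ^ 2) = ε * sin θ := by
  rw [show ε ^ 2 - (ε * cos θ) ^ 2 = (ε * sin θ) ^ 2 by
      linear_combination -ε ^ 2 * sin_sq_add_cos_sq θ,
    sqrt_sq (mul_nonneg hε hθ)]

/-- No integrability is assumed: the substitution rule for monotone changes of variables holds
for arbitrary integrands, with both sides vanishing together. -/
theorem integral_Ioo_div_sqrt_sq_sub_sq_eq_integral_comp_cos {ε : ℝ} (hε : 0 < ε) (g : ℝ → ℝ) :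
    ∫ y in Ioo (-ε) ε, g y / √(ε ^ 2 - y ^ 2) = ∫ θ in 0..π, g (ε * cos θ) := by
  have hsubst := integral_comp_mul_deriv_of_deriv_nonpos (a := 0) (b := π)
    (g := fun y => g y / √(ε ^ 2 - y ^ 2)) (f := fun θ => ε * cos θ)
    (f' := fun θ => -(ε * sin θ)) (by fun_prop)
    (fun θ _ => by simpa using (hasDerivAt_cos θ).const_mul ε)
    (fun θ hθ => by
      rw [min_eq_left pi_pos.le, max_eq_right pi_pos.le] at hθ
      have := sin_pos_of_pos_of_lt_pi hθ.1 hθ.2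
      simp only [Left.neg_nonpos_iff]
      positivity)
  simp only [cos_zero, cos_pi, mul_one, mul_neg, Function.comp_apply] at hsubst
  rw [← integral_Ioc_eq_integral_Ioo, ← integral_of_le (by linarith), integral_symm, ← hsubst,
    ← intervalIntegral.integral_neg]
  refine integral_congr_ae ?_
  filter_upwards [Measure.ae_ne volume π] with θ hπ hθ
  rw [uIoc_of_le pi_pos.le] at hθ
  have hsin : 0 < sin θ := sin_pos_of_pos_of_lt_pi hθ.1 (lt_of_le_of_ne hθ.2 hπ)
  rw [sqrt_sq_sub_mul_cos_sq hε.le hsin.le]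
  field_simp

theorem intervalIntegrable_log_comp_of_analyticAt {f : ℝ → ℝ} (hf : ∀ x, AnalyticAt ℝ f x)
    (a b : ℝ) : IntervalIntegrable (fun x => log (f x)) volume a b :=
  MeromorphicOn.intervalIntegrable_log (AnalyticOnNhd.meromorphicOn fun x _ => hf x)

theorem integral_log_sin_add_pi (a : ℝ) : ∫ u in a..a + π, log (sin u) = -log 2 * π := by
  have hper : Function.Periodic (fun u => log (sin u)) π := fun u => by
    simp only [sin_add_pi, log_neg_eq_log]
  rw [hper.intervalIntegral_add_eq a 0, zero_add, integral_log_sin_zero_pi]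

theorem ae_cos_ne_of_mem_uIoc (c : ℝ) : ∀ᵐ θ, θ ∈ Ι 0 π → cos θ ≠ c := by
  filter_upwards [Measure.ae_ne volume (arccos c)] with θ hne hθ hcos
  rw [uIoc_of_le pi_pos.le] at hθ
  exact hne (by rw [← hcos, arccos_cos hθ.1.le hθ.2])

-- `Real.log` is even, so no absolute values are needed.
theorem log_cos_sub_cos {φ θ : ℝ} (h : cos θ ≠ cos φ) :
    log (cos φ - cos θ) = log 2 + log (sin (φ / 2 + θ / 2)) + log (sin (φ / 2 - θ / 2)) := by
  have hprod : cos φ - cos θ = -(2 * sin (φ / 2 + θ / 2) * sin (φ / 2 - θ / 2)) := by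
    rw [cos_sub_cos]
    ring_nf
  have hne : 2 * sin (φ / 2 + θ / 2) * sin (φ / 2 - θ / 2) ≠ 0 := by
    rw [← neg_ne_zero, ← hprod]
    exact sub_ne_zero.2 (Ne.symm h)
  rw [hprod, log_neg_eq_log, log_mul (left_ne_zero_of_mul hne) (right_ne_zero_of_mul hne),
    log_mul two_ne_zero (right_ne_zero_of_mul (left_ne_zero_of_mul hne))]

theorem integral_log_cos_sub_cos (φ : ℝ) : ∫ θ in 0..π, log (cos φ - cos θ) = -log 2 * π := by
  calc ∫ θ in 0..π, log (cos φ - cos θ)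
      = ∫ θ in 0..π, log 2 + log (sin (φ / 2 + θ / 2)) + log (sin (φ / 2 - θ / 2)) := by
        refine integral_congr_ae ?_
        filter_upwards [ae_cos_ne_of_mem_uIoc (cos φ)] with θ hθ hmem
        exact log_cos_sub_cos (hθ hmem)
    _ = π * log 2 + 2 * ∫ u in φ / 2 - π / 2..φ / 2 + π / 2, log (sin u) := by
        rw [integral_add (intervalIntegrable_const.add
              (intervalIntegrable_log_comp_of_analyticAt (fun _ => by fun_prop) 0 π))
            (intervalIntegrable_log_comp_of_analyticAt (fun _ => by fun_prop) 0 π),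
          integral_add intervalIntegrable_const
            (intervalIntegrable_log_comp_of_analyticAt (fun _ => by fun_prop) 0 π),
          intervalIntegral.integral_const,
          integral_comp_add_div (fun u => log (sin u)) two_ne_zero,
          integral_comp_sub_div (fun u => log (sin u)) two_ne_zero,
          ← integral_add_adjacent_intervals (a := φ / 2 - π / 2) (b := φ / 2)
            (c := φ / 2 + π / 2) (f := fun u => log (sin u))
            intervalIntegrable_log_sin intervalIntegrable_log_sin]
        simp only [smul_eq_mul, zero_div, add_zero, sub_zero]
        ring
    _ = -log 2 * π := by
        rw [show φ / 2 + π / 2 = (φ / 2 - π / 2) + π by ring, integral_log_sin_add_pi]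
        ring

theorem stmt_1 (ε x : ℝ) (hε : 0 < ε) (hx : x ∈ Icc (-ε) ε) :
    ∫ y in Ioo (-ε) ε, Real.log |x - y| / Real.sqrt (ε ^ 2 - y ^ 2)
      = π * Real.log (ε / 2) := by
  have hxε : x / ε ∈ Icc (-1) 1 :=
    ⟨(le_div_iff₀ hε).2 (by linarith [hx.1]), (div_le_one hε).2 hx.2⟩
  obtain ⟨φ, -, hφ⟩ := surjOn_cos hxε
  obtain rfl : x = ε * cos φ := by
    rw [hφ]
    field_simp
  rw [integral_Ioo_div_sqrt_sq_sub_sq_eq_integral_comp_cos hε]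
  calc ∫ θ in 0..π, log |ε * cos φ - ε * cos θ|
      = ∫ θ in 0..π, log ε + log (cos φ - cos θ) := by
        refine integral_congr_ae ?_
        filter_upwards [ae_cos_ne_of_mem_uIoc (cos φ)] with θ hθ hmem
        rw [← mul_sub, log_abs, log_mul hε.ne' (sub_ne_zero.2 (hθ hmem).symm)]
    _ = π * log (ε / 2) := by
        rw [integral_add intervalIntegrable_const
            (intervalIntegrable_log_comp_of_analyticAt (fun _ => by fun_prop) 0 π),
          intervalIntegral.integral_const, integral_log_cos_sub_cos, log_div hε.ne' two_ne_zero,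
          smul_eq_mul]
        ring
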